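/- For every integer k ≥ 1 and every color c ∈ χ(E), the number of colors c' ∈ χ(E(T(c))) with φ(c') − φ(c) ≤ k is strictly less than 2^{k+1}. -/
import Mathlib


open scoped Classical

noncomputable section

/-- A finite rooted metric tree.  Each non-root vertex `v` determines the edge
`(v, parent v)`; edges are identified with their lower endpoints. -/
structure FinTree : Type 1 where
  V : Type
  fin : Fintype V
  root : V
  parent : V → V
  parent_root : parent root = root
  reaches_root : ∀ v : V, ∃ n : ℕ, parent^[n] v = root
  len : V → ℝ
  len_nonneg : ∀ v : V, 0 ≤ len v

attribute [instance] FinTree.fin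

namespace FinTree

variable (T : FinTree)

/-- `u` is a (weak) ancestor of `v`. -/
def Anc (u v : T.V) : Prop := ∃ n : ℕ, T.parent^[n] v = u

/-- The set of edges (identified with their lower endpoints) on the path `P_v`
from the root to `v`. -/
def pathToRoot (v : T.V) : Finset T.V :=
  Finset.univ.filter fun u => u ≠ T.root ∧ T.Anc u v

/-- The set of edges on the unique path between `x` and `y`. -/
def pathEdges (x y : T.V) : Finset T.V :=
  (T.pathToRoot x \ T.pathToRoot y) ∪ (T.pathToRoot y \ T.pathToRoot x)

/-- The shortest-path pseudometric `d_T` of the tree. -/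
def dist (x y : T.V) : ℝ := ∑ e ∈ T.pathEdges x y, T.len e

/-- The set of all edges of the tree. -/
def edges : Finset T.V := Finset.univ.filter fun u => u ≠ T.root

/-- The depth of a vertex (number of edges on the path to the root). -/
def depth (v : T.V) : ℕ := Nat.find (T.reaches_root v)

/-- `x` lies on the path between `a` and `b`. -/
def OnPath (x a b : T.V) : Prop := T.pathEdges a x ⊆ T.pathEdges a b

/-- `T` is the complete `k`-ary tree of height `h` with unit edge lengths. -/
def IsCompleteKAry (k h : ℕ) : Prop :=
  (∀ v : T.V, v ≠ T.root → T.len v = 1) ∧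
  (∀ v : T.V, T.depth v ≤ h) ∧
  ∀ v : T.V, T.depth v < h →
    (Finset.univ.filter fun u : T.V => T.parent u = v ∧ u ≠ v).card = k

/-- A monotone coloring: every color class is a connected subset of the edge
set of some root-leaf path. -/
def IsMonotone (χ : T.V → ℕ) : Prop :=
  ∀ u v : T.V, u ≠ T.root → v ≠ T.root → χ u = χ v →
    (T.Anc u v ∨ T.Anc v u) ∧
      ∀ w : T.V, w ≠ T.root → T.Anc u w → T.Anc w v → χ w = χ u

/-- The multiplicity `M(χ)` of a coloring. -/
def mult (χ : T.V → ℕ) : ℕ :=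
  Finset.univ.sup fun v : T.V => ((T.pathToRoot v).image χ).card

/-- `len_χ(c)`: the total length of the color class of `c`. -/
def colorLen (χ : T.V → ℕ) (c : ℕ) : ℝ :=
  ∑ e ∈ T.edges.filter (fun e => χ e = c), T.len e

/-- The set of colors `C_χ(x,y;δ)`. -/
def sigColors (χ : T.V → ℕ) (x y : T.V) (δ : ℝ) : Finset ℕ :=
  (((T.pathToRoot x).image χ \ (T.pathToRoot y).image χ) ∪
      ((T.pathToRoot y).image χ \ (T.pathToRoot x).image χ)).filter
    fun c => (∑ e ∈ (T.pathEdges x y).filter (fun e => χ e = c), T.len e) ≤ δ * T.colorLen χ c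

/-- `ρ_χ(x,y;δ)`. -/
def rho (χ : T.V → ℕ) (x y : T.V) (δ : ℝ) : ℝ :=
  ∑ c ∈ T.sigColors χ x y δ, T.colorLen χ c

/-- The topmost edge of the color class of `c` (junk value if none exists). -/
def topEdge (χ : T.V → ℕ) (c : ℕ) : T.V :=
  if h : ∃ e : T.V, e ≠ T.root ∧ χ e = c ∧ ∀ e' : T.V, e' ≠ T.root → χ e' = c → T.Anc e e'
  then h.choose else T.root

/-- `v_c`: the vertex of `γ_c` closest to the root. -/
def vcol (χ : T.V → ℕ) (c : ℕ) : T.V := T.parent (T.topEdge χ c)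

/-- The edge set `E(T(c))` of the subtree under the color `c`; for the root
color `c₀` it is all of `E`. -/
def subEdges (χ : T.V → ℕ) (c₀ c : ℕ) : Finset T.V :=
  if c = c₀ then T.edges else T.edges.filter fun e => T.Anc (T.topEdge χ c) e

/-- The parent color `ρ(c) = χ(v_c, p(v_c))`, with the convention
`χ(r,r) = c₀`. -/
def parentColor (χ : T.V → ℕ) (c₀ c : ℕ) : ℕ :=
  if T.vcol χ c = T.root then c₀ else χ (T.vcol χ c)

/-- `κ(c) = ⌊log₂(|E(T(ρ(c)))| / |E(T(c))|)⌋ + 1`. -/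
def kappa (χ : T.V → ℕ) (c₀ c : ℕ) : ℤ :=
  ⌊Real.logb 2 (((T.subEdges χ c₀ (T.parentColor χ c₀ c)).card : ℝ) /
      ((T.subEdges χ c₀ c).card : ℝ))⌋ + 1

/-- `φ(c₀) = 0` and `φ(c) = κ(c) + φ(ρ(c))`; equivalently
`φ(c) = Σ_{c' ∈ χ(E(P_{v_c})) ∪ {c}} κ(c')`. -/
def phi (χ : T.V → ℕ) (c₀ c : ℕ) : ℤ :=
  if c = c₀ then 0
  else T.kappa χ c₀ c + ∑ c' ∈ (T.pathToRoot (T.vcol χ c)).image χ, T.kappa χ c₀ c'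

/-- `m(T)`: the minimum positive edge length. -/
def minLen : ℝ := sInf {x : ℝ | ∃ e : T.V, e ≠ T.root ∧ 0 < T.len e ∧ T.len e = x}

/-- `⌊log₂( m(T) / (M(χ) + log₂|E|) )⌋`, the scale below which all `τ_i` vanish. -/
def iMin (χ : T.V → ℕ) : ℤ :=
  ⌊Real.logb 2 (T.minLen / ((T.mult χ : ℝ) + Real.logb 2 (T.edges.card : ℝ)))⌋

/-- `τ` is the family of scale selectors: `τ_i(v) = 0` for `i < iMin`, and for
`i ≥ iMin`,
`τ_i(v) = min( ⌈(d_T(v,v_c) − min(d_T(v,v_c), Σ_{j<i} 2^j τ_j(v)))/2^i⌉,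
               φ(c) − Σ_{c' ∈ χ(E(P_v))} τ_i(v_{c'}) )` where `c = χ(v,p(v))`. -/
def IsScaleSelector (χ : T.V → ℕ) (c₀ : ℕ) (τ : ℤ → T.V → ℕ) : Prop :=
  (∀ v : T.V, ∀ i : ℤ, i < T.iMin χ → τ i v = 0) ∧
  ∀ v : T.V, v ≠ T.root → ∀ i : ℤ, T.iMin χ ≤ i →
    (τ i v : ℤ) =
      min
        ⌈(T.dist v (T.vcol χ (χ v)) -
            min (T.dist v (T.vcol χ (χ v)))
              (∑ j ∈ Finset.Ico (T.iMin χ) i, (2 : ℝ) ^ j * (τ j v : ℝ))) / (2 : ℝ) ^ i⌉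
        (T.phi χ c₀ (χ v) - ∑ c' ∈ (T.pathToRoot v).image χ, (τ i (T.vcol χ c') : ℤ))

/-- The matrix `Δ_i(v) ∈ ℝ^{m×t}`. -/
def Delta (χ : T.V → ℕ) (c₀ : ℕ) (τ : ℤ → T.V → ℕ) (m t : ℕ) (i : ℤ) (v : T.V) :
    Matrix (Fin m) (Fin t) ℝ := fun j k =>
  let d : ℝ := T.dist v (T.vcol χ (χ v))
  let s : ℝ := ∑ l ∈ Finset.Ico (T.iMin χ) i, (2 : ℝ) ^ l * (τ l v : ℝ)
  let α : ℤ := ∑ c' ∈ (T.pathToRoot v).image χ, ((t : ℤ) ^ 2 * (τ i (T.vcol χ c') : ℤ))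
  let β : ℤ := α + min ((t : ℤ) ^ 2 * (τ i v : ℤ)) ⌊(d - s) * (t : ℝ) ^ 2 / (2 : ℝ) ^ i⌋
  if (k : ℕ) = 0 then
    if α < (j : ℤ) + 1 ∧ (j : ℤ) + 1 ≤ β then (2 : ℝ) ^ i / (t : ℝ) ^ 2
    else if (j : ℤ) + 1 = β + 1 ∧ β - α < (t : ℤ) ^ 2 * (τ i v : ℤ) then
      d - (s + ((β - α : ℤ) : ℝ) * ((2 : ℝ) ^ i / (t : ℝ) ^ 2))
    else 0
  else 0

end FinTree

/-- The entrywise ℓ₁ norm of a matrix. -/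
def matOne {m t : ℕ} (A : Matrix (Fin m) (Fin t) ℝ) : ℝ := ∑ j, ∑ k, |A j k|

section Aux

namespace FinTree

variable {T : FinTree}

lemma anc_refl (v : T.V) : T.Anc v v := ⟨0, rfl⟩

lemma anc_trans {u v w : T.V} (h1 : T.Anc u v) (h2 : T.Anc w u) : T.Anc w v := by
  obtain ⟨n, hn⟩ := h1; obtain ⟨m, hm⟩ := h2
  exact ⟨m + n, by rw [Function.iterate_add_apply, hn, hm]⟩

lemma iterate_parent_root (n : ℕ) : T.parent^[n] T.root = T.root := by
  induction n with
  | zero => rfl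
  | succ n ih => rw [Function.iterate_succ_apply, T.parent_root, ih]

lemma root_anc {v : T.V} (h : T.Anc v T.root) : v = T.root := by
  obtain ⟨n, hn⟩ := h
  rw [iterate_parent_root] at hn; exact hn.symm

lemma iterate_cycle {v : T.V} {p : ℕ} (hp : T.parent^[p] v = v) (q : ℕ) :
    T.parent^[p * q] v = v := by
  induction q with
  | zero => simp
  | succ q ih => rw [Nat.mul_succ, Function.iterate_add_apply, hp, ih]

lemma anc_antisymm {u v : T.V} (h1 : T.Anc u v) (h2 : T.Anc v u) : u = v := by
  obtain ⟨n, hn⟩ := h1; obtain ⟨m, hm⟩ := h2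
  rcases Nat.eq_zero_or_pos (m + n) with h | h
  · have hn0 : n = 0 := by omega
    subst hn0; simpa using hn.symm
  · have hcyc : T.parent^[m + n] v = v := by
      rw [Function.iterate_add_apply, hn, hm]
    obtain ⟨N, hN⟩ := T.reaches_root v
    have h1' : T.parent^[(m + n) * (N + 1)] v = v := iterate_cycle hcyc (N + 1)
    have hge : N + 1 ≤ (m + n) * (N + 1) := Nat.le_mul_of_pos_left _ h
    have h2' : T.parent^[(m + n) * (N + 1)] v = T.root := by
      have heq : (m + n) * (N + 1) = ((m + n) * (N + 1) - N) + N := by omega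
      rw [heq, Function.iterate_add_apply, hN, iterate_parent_root]
    have hv : v = T.root := by rw [← h1', h2']
    subst hv
    rw [iterate_parent_root] at hn; exact hn.symm ▸ rfl

lemma anc_comparable {u v w : T.V} (h1 : T.Anc u w) (h2 : T.Anc v w) :
    T.Anc u v ∨ T.Anc v u := by
  obtain ⟨n, hn⟩ := h1; obtain ⟨m, hm⟩ := h2
  rcases le_total n m with h | h
  · right
    exact ⟨m - n, by rw [← hn, ← Function.iterate_add_apply, Nat.sub_add_cancel h]; exact hm⟩
  · left
    exact ⟨n - m, by rw [← hm, ← Function.iterate_add_apply, Nat.sub_add_cancel h]; exact hn⟩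

lemma parent_fix {v : T.V} (h : T.parent v = v) : v = T.root := by
  obtain ⟨N, hN⟩ := T.reaches_root v
  have : ∀ n : ℕ, T.parent^[n] v = v := by
    intro n; induction n with
    | zero => rfl
    | succ n ih => rw [Function.iterate_succ_apply, h, ih]
  rw [this N] at hN; exact hN

lemma anc_parent_of_ne {u v : T.V} (h : T.Anc u v) (hne : u ≠ v) :
    T.Anc u (T.parent v) := by
  obtain ⟨n, hn⟩ := h
  match n, hn with
  | 0, hn => exact absurd hn.symm hne
  | n + 1, hn => exact ⟨n, by rw [← Function.iterate_succ_apply]; exact hn⟩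

lemma parent_anc (v : T.V) : T.Anc (T.parent v) v := ⟨1, rfl⟩

lemma depth_spec (v : T.V) : T.parent^[T.depth v] v = T.root := Nat.find_spec (T.reaches_root v)

lemma depth_le {v : T.V} {n : ℕ} (h : T.parent^[n] v = T.root) : T.depth v ≤ n :=
  Nat.find_min' (T.reaches_root v) h

lemma depth_root : T.depth T.root = 0 := Nat.le_zero.mp (depth_le rfl)

lemma depth_pos {v : T.V} (h : v ≠ T.root) : 0 < T.depth v := by
  rcases Nat.eq_zero_or_pos (T.depth v) with h0 | h0
  · have := depth_spec v; rw [h0] at this; exact absurd this h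
  · exact h0

lemma anc_depth_lt {u v : T.V} (h : T.Anc u v) (hne : u ≠ v) : T.depth u < T.depth v := by
  obtain ⟨n, hn⟩ := h
  have hnpos : 0 < n := by
    rcases Nat.eq_zero_or_pos n with h0 | h0
    · subst h0; exact absurd hn.symm hne
    · exact h0
  rcases le_or_gt n (T.depth v) with hle | hlt
  · have : T.parent^[T.depth v - n] u = T.root := by
      rw [← hn, ← Function.iterate_add_apply, Nat.sub_add_cancel hle]
      exact depth_spec v
    have h1 := depth_le this
    have h2 : 0 < T.depth v := by
      rcases Nat.eq_zero_or_pos (T.depth v) with h0 | h0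
      · omega
      · exact h0
    omega
  · have hu : u = T.root := by
      rw [← hn, show n = (n - T.depth v) + T.depth v by omega, Function.iterate_add_apply,
        depth_spec, iterate_parent_root]
    have hv : v ≠ T.root := fun hv => hne (by rw [hu, hv])
    rw [hu, depth_root]
    exact depth_pos hv

variable {χ : T.V → ℕ} {c₀ : ℕ}

lemma topEdge_cond (hχ : T.IsMonotone χ) {c : ℕ} (hc : ∃ e : T.V, e ≠ T.root ∧ χ e = c) :
    ∃ e : T.V, e ≠ T.root ∧ χ e = c ∧ ∀ e' : T.V, e' ≠ T.root → χ e' = c → T.Anc e e' := by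
  obtain ⟨e₀, he₀, hce₀⟩ := hc
  have hne : (Finset.univ.filter fun e : T.V => e ≠ T.root ∧ χ e = c).Nonempty :=
    ⟨e₀, by simp [he₀, hce₀]⟩
  obtain ⟨m, hmS, hmin⟩ :=
    (Finset.univ.filter fun e : T.V => e ≠ T.root ∧ χ e = c).exists_min_image T.depth hne
  simp only [Finset.mem_filter, Finset.mem_univ, true_and] at hmS
  refine ⟨m, hmS.1, hmS.2, ?_⟩
  intro e' he' hc'
  rcases (hχ m e' hmS.1 he' (by rw [hmS.2, hc'])).1 with h | h
  · exact h
  · rcases eq_or_ne e' m with rfl | hne'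
    · exact anc_refl _
    · have h1 := anc_depth_lt h hne'
      have h2 := hmin e' (by simp [he', hc'])
      omega

lemma topEdge_spec (hχ : T.IsMonotone χ) {c : ℕ} (hc : ∃ e : T.V, e ≠ T.root ∧ χ e = c) :
    T.topEdge χ c ≠ T.root ∧ χ (T.topEdge χ c) = c ∧
      ∀ e' : T.V, e' ≠ T.root → χ e' = c → T.Anc (T.topEdge χ c) e' := by
  have h := topEdge_cond hχ hc
  rw [FinTree.topEdge, dif_pos h]
  exact h.choose_spec

lemma mem_subEdges (hcc₀ : c ≠ c₀) {e : T.V} :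
    e ∈ T.subEdges χ c₀ c ↔ e ≠ T.root ∧ T.Anc (T.topEdge χ c) e := by
  simp [FinTree.subEdges, FinTree.edges, hcc₀, Finset.mem_filter, and_comm]

lemma topEdge_mem_subEdges (hχ : T.IsMonotone χ) {c : ℕ}
    (hc : ∃ e : T.V, e ≠ T.root ∧ χ e = c) (hcc₀ : c ≠ c₀) :
    T.topEdge χ c ∈ T.subEdges χ c₀ c :=
  (mem_subEdges hcc₀).2 ⟨(topEdge_spec hχ hc).1, anc_refl _⟩

lemma subEdges_nonempty_card (hχ : T.IsMonotone χ) {c : ℕ}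
    (hc : ∃ e : T.V, e ≠ T.root ∧ χ e = c) (hcc₀ : c ≠ c₀) :
    0 < (T.subEdges χ c₀ c).card :=
  Finset.card_pos.2 ⟨_, topEdge_mem_subEdges hχ hc hcc₀⟩

/-- Each color appearing in a subtree occurs on some edge. -/
lemma exists_edge_of_mem_colors {c c' : ℕ} (h : c' ∈ (T.subEdges χ c₀ c).image χ) :
    ∃ e : T.V, e ≠ T.root ∧ χ e = c' := by
  obtain ⟨e, he, hce⟩ := Finset.mem_image.1 h
  have : e ≠ T.root := by
    by_cases hcc₀ : c = c₀
    · subst hcc₀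
      rw [FinTree.subEdges, if_pos rfl] at he
      simp only [FinTree.edges, Finset.mem_filter] at he
      exact he.2
    · exact ((mem_subEdges hcc₀).1 he).1
  exact ⟨e, this, hce⟩

lemma self_mem_colors (hχ : T.IsMonotone χ) {c : ℕ}
    (hc : ∃ e : T.V, e ≠ T.root ∧ χ e = c) (hcc₀ : c ≠ c₀) :
    c ∈ (T.subEdges χ c₀ c).image χ :=
  Finset.mem_image.2 ⟨_, topEdge_mem_subEdges hχ hc hcc₀, (topEdge_spec hχ hc).2.1⟩

/-- Nesting: the top edge of a color occurring in `T(c)` lies below the top of `c`. -/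
lemma top_anc_top (hχ : T.IsMonotone χ) {c c' : ℕ}
    (hc : ∃ e : T.V, e ≠ T.root ∧ χ e = c) (hcc₀ : c ≠ c₀) (hne : c' ≠ c)
    (h : c' ∈ (T.subEdges χ c₀ c).image χ) :
    T.Anc (T.topEdge χ c) (T.topEdge χ c') := by
  obtain ⟨e, he, hce⟩ := Finset.mem_image.1 h
  rw [mem_subEdges hcc₀] at he
  have hc' : ∃ e : T.V, e ≠ T.root ∧ χ e = c' := ⟨e, he.1, hce⟩
  obtain ⟨htr, htc, htop⟩ := topEdge_spec hχ hc
  obtain ⟨htr', htc', htop'⟩ := topEdge_spec hχ hc'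
  have h1 : T.Anc (T.topEdge χ c') e := htop' e he.1 hce
  rcases anc_comparable h1 he.2 with h2 | h2
  · -- Anc (top c') (top c) : contradiction
    rcases eq_or_ne (T.topEdge χ c') (T.topEdge χ c) with heq | hne'
    · exact absurd (by rw [← htc, ← heq, htc']) hne
    · have := (hχ (T.topEdge χ c') e htr' he.1 (by rw [htc', hce])).2
        (T.topEdge χ c) htr h2 he.2
      rw [htc, htc'] at this
      exact absurd this.symm hne
  · exact h2

lemma subEdges_subset (hχ : T.IsMonotone χ) {c c' : ℕ}
    (hc : ∃ e : T.V, e ≠ T.root ∧ χ e = c) (hcc₀ : c ≠ c₀) (hc'c₀ : c' ≠ c₀)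
    (hne : c' ≠ c) (h : c' ∈ (T.subEdges χ c₀ c).image χ) :
    T.subEdges χ c₀ c' ⊆ T.subEdges χ c₀ c := by
  intro e he
  rw [mem_subEdges hc'c₀] at he
  exact (mem_subEdges hcc₀).2 ⟨he.1, anc_trans he.2 (top_anc_top hχ hc hcc₀ hne h)⟩

lemma topEdge_notMem (hχ : T.IsMonotone χ) {c c' : ℕ}
    (hc : ∃ e : T.V, e ≠ T.root ∧ χ e = c) (hcc₀ : c ≠ c₀) (hc'c₀ : c' ≠ c₀)
    (hne : c' ≠ c) (h : c' ∈ (T.subEdges χ c₀ c).image χ) :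
    T.topEdge χ c ∉ T.subEdges χ c₀ c' := by
  intro hmem
  have hc' := exists_edge_of_mem_colors h
  have h2 := ((mem_subEdges hc'c₀).1 hmem).2
  have h1 := top_anc_top hχ hc hcc₀ hne h
  have heq : T.topEdge χ c = T.topEdge χ c' := anc_antisymm h1 h2
  apply hne
  rw [← (topEdge_spec hχ hc').2.1, ← heq, (topEdge_spec hχ hc).2.1]


lemma parentColor_eq {c' : ℕ} (h : T.vcol χ c' ≠ T.root) :
    T.parentColor χ c₀ c' = χ (T.vcol χ c') := if_neg h

lemma hc_parentColor {c' : ℕ} (h : T.vcol χ c' ≠ T.root) :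
    ∃ e : T.V, e ≠ T.root ∧ χ e = T.parentColor χ c₀ c' :=
  ⟨T.vcol χ c', h, (parentColor_eq h).symm⟩

lemma parentColor_ne_c₀ (hc₀ : ∀ e : T.V, e ≠ T.root → χ e ≠ c₀) {c' : ℕ}
    (h : T.vcol χ c' ≠ T.root) : T.parentColor χ c₀ c' ≠ c₀ := by
  rw [parentColor_eq h]; exact hc₀ _ h

lemma top_parent_anc_vcol (hχ : T.IsMonotone χ) {c' : ℕ} (h : T.vcol χ c' ≠ T.root) :
    T.Anc (T.topEdge χ (T.parentColor χ c₀ c')) (T.vcol χ c') :=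
  (topEdge_spec hχ (hc_parentColor h)).2.2 _ h (parentColor_eq h).symm

lemma top_parent_anc_top (hχ : T.IsMonotone χ) {c' : ℕ} (h : T.vcol χ c' ≠ T.root) :
    T.Anc (T.topEdge χ (T.parentColor χ c₀ c')) (T.topEdge χ c') :=
  anc_trans (parent_anc _) (top_parent_anc_vcol hχ h)

lemma subEdges_subset_parent (hχ : T.IsMonotone χ) (hc₀ : ∀ e : T.V, e ≠ T.root → χ e ≠ c₀)
    {c' : ℕ} (hc' : ∃ e : T.V, e ≠ T.root ∧ χ e = c') (h : T.vcol χ c' ≠ T.root) :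
    T.subEdges χ c₀ c' ⊆ T.subEdges χ c₀ (T.parentColor χ c₀ c') := by
  obtain ⟨e₀, he₀, hce₀⟩ := hc'
  have hc'c₀ : c' ≠ c₀ := by rintro rfl; exact hc₀ e₀ he₀ hce₀
  intro e he
  rw [mem_subEdges hc'c₀] at he
  exact (mem_subEdges (parentColor_ne_c₀ hc₀ h)).2
    ⟨he.1, anc_trans he.2 (top_parent_anc_top hχ h)⟩

lemma subEdges_c₀ : T.subEdges χ c₀ c₀ = T.edges := if_pos rfl

lemma vcol_notMem_self (hχ : T.IsMonotone χ) {c' : ℕ}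
    (hc' : ∃ e : T.V, e ≠ T.root ∧ χ e = c') (hcc : c' ≠ c₀) :
    T.vcol χ c' ∉ T.subEdges χ c₀ c' := by
  intro hmem
  obtain ⟨e₀, he₀, hce₀⟩ := hc'
  have h2 := ((mem_subEdges hcc).1 hmem).2
  have heq := anc_antisymm h2 (parent_anc (T.topEdge χ c'))
  have := parent_fix heq.symm
  exact (topEdge_spec hχ ⟨e₀, he₀, hce₀⟩).1 this

lemma card_subEdges_lt_parent (hχ : T.IsMonotone χ) (hc₀ : ∀ e : T.V, e ≠ T.root → χ e ≠ c₀)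
    {c' : ℕ} (hc' : ∃ e : T.V, e ≠ T.root ∧ χ e = c') (h : T.vcol χ c' ≠ T.root) :
    (T.subEdges χ c₀ c').card < (T.subEdges χ c₀ (T.parentColor χ c₀ c')).card := by
  apply Finset.card_lt_card
  refine ⟨subEdges_subset_parent hχ hc₀ hc' h, fun hsup => ?_⟩
  have hv : T.vcol χ c' ∈ T.subEdges χ c₀ (T.parentColor χ c₀ c') :=
    (mem_subEdges (parentColor_ne_c₀ hc₀ h)).2 ⟨h, top_parent_anc_vcol hχ h⟩
  obtain ⟨e₀, he₀, hce₀⟩ := hc'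
  exact vcol_notMem_self hχ ⟨e₀, he₀, hce₀⟩ (by rintro rfl; exact hc₀ e₀ he₀ hce₀) (hsup hv)

lemma subEdges_subset_edges {c' : ℕ} : T.subEdges χ c₀ c' ⊆ T.edges := by
  rw [FinTree.subEdges]
  by_cases h : c' = c₀
  · rw [if_pos h]
  · rw [if_neg h]; exact Finset.filter_subset _ _

lemma card_subEdges_le_parent (hχ : T.IsMonotone χ) (hc₀ : ∀ e : T.V, e ≠ T.root → χ e ≠ c₀)
    {c' : ℕ} (hc' : ∃ e : T.V, e ≠ T.root ∧ χ e = c') :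
    (T.subEdges χ c₀ c').card ≤ (T.subEdges χ c₀ (T.parentColor χ c₀ c')).card := by
  by_cases h : T.vcol χ c' = T.root
  · rw [FinTree.parentColor, if_pos h, subEdges_c₀]
    exact Finset.card_le_card subEdges_subset_edges
  · exact (card_subEdges_lt_parent hχ hc₀ hc' h).le

lemma kappa_pos (hχ : T.IsMonotone χ) (hc₀ : ∀ e : T.V, e ≠ T.root → χ e ≠ c₀)
    {c' : ℕ} (hc' : ∃ e : T.V, e ≠ T.root ∧ χ e = c') : 1 ≤ T.kappa χ c₀ c' := by
  obtain ⟨e₀, he₀, hce₀⟩ := hc'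
  have hc'c₀ : c' ≠ c₀ := by rintro rfl; exact hc₀ e₀ he₀ hce₀
  have hb : 0 < (T.subEdges χ c₀ c').card := subEdges_nonempty_card hχ ⟨e₀, he₀, hce₀⟩ hc'c₀
  have hab := card_subEdges_le_parent hχ hc₀ ⟨e₀, he₀, hce₀⟩
  have h1 : (0:ℝ) ≤ Real.logb 2
      (((T.subEdges χ c₀ (T.parentColor χ c₀ c')).card : ℝ) / ((T.subEdges χ c₀ c').card : ℝ)) := by
    apply Real.logb_nonneg one_lt_two
    rw [le_div_iff₀ (by exact_mod_cast hb)]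
    simpa using (Nat.cast_le.2 hab : ((T.subEdges χ c₀ c').card : ℝ) ≤ _)
  have h2 : (0:ℤ) ≤ ⌊Real.logb 2
      (((T.subEdges χ c₀ (T.parentColor χ c₀ c')).card : ℝ) / ((T.subEdges χ c₀ c').card : ℝ))⌋ :=
    Int.floor_nonneg.2 h1
  rw [FinTree.kappa]
  omega

lemma kappa_bound (hχ : T.IsMonotone χ) (hc₀ : ∀ e : T.V, e ≠ T.root → χ e ≠ c₀)
    {c' : ℕ} (hc' : ∃ e : T.V, e ≠ T.root ∧ χ e = c') :
    ((T.subEdges χ c₀ (T.parentColor χ c₀ c')).card : ℝ) <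
      ((T.subEdges χ c₀ c').card : ℝ) * (2:ℝ) ^ (T.kappa χ c₀ c') := by
  obtain ⟨e₀, he₀, hce₀⟩ := hc'
  have hc'c₀ : c' ≠ c₀ := by rintro rfl; exact hc₀ e₀ he₀ hce₀
  have hb : (0:ℝ) < ((T.subEdges χ c₀ c').card : ℝ) := by
    exact_mod_cast subEdges_nonempty_card hχ ⟨e₀, he₀, hce₀⟩ hc'c₀
  have ha : (0:ℝ) < ((T.subEdges χ c₀ (T.parentColor χ c₀ c')).card : ℝ) :=
    lt_of_lt_of_le hb (by exact_mod_cast card_subEdges_le_parent hχ hc₀ ⟨e₀, he₀, hce₀⟩)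
  set a : ℝ := ((T.subEdges χ c₀ (T.parentColor χ c₀ c')).card : ℝ)
  set b : ℝ := ((T.subEdges χ c₀ c').card : ℝ)
  set x : ℝ := Real.logb 2 (a / b) with hx
  have hdiv : (0:ℝ) < a / b := div_pos ha hb
  have h1 : a / b = (2:ℝ) ^ x := (Real.rpow_logb two_pos (by norm_num) hdiv).symm
  have h2 : x < ((⌊x⌋ + 1 : ℤ) : ℝ) := by exact_mod_cast Int.lt_floor_add_one x
  have h3 : (2:ℝ) ^ x < (2:ℝ) ^ (((⌊x⌋ + 1 : ℤ) : ℝ)) :=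
    (Real.rpow_lt_rpow_left_iff one_lt_two).2 h2
  rw [Real.rpow_intCast] at h3
  have h4 : a / b < (2:ℝ) ^ ((⌊x⌋ + 1 : ℤ)) := h1 ▸ h3
  have h5 := (div_lt_iff₀ hb).1 h4
  rw [FinTree.kappa]
  calc a < (2:ℝ) ^ ((⌊x⌋ + 1 : ℤ)) * b := h5
  _ = b * (2:ℝ) ^ ((⌊x⌋ + 1 : ℤ)) := mul_comm _ _

lemma mem_pathToRoot {u v : T.V} : u ∈ T.pathToRoot v ↔ u ≠ T.root ∧ T.Anc u v := by
  simp [FinTree.pathToRoot]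

lemma pathToRoot_root : T.pathToRoot T.root = ∅ := by
  ext u
  simp only [mem_pathToRoot, Finset.notMem_empty, iff_false]
  rintro ⟨h1, h2⟩
  exact h1 (root_anc h2)

lemma notMem_path_vcol (hχ : T.IsMonotone χ) {d : ℕ}
    (hd : ∃ e : T.V, e ≠ T.root ∧ χ e = d) :
    d ∉ (T.pathToRoot (T.vcol χ d)).image χ := by
  intro h
  obtain ⟨e, he, hde⟩ := Finset.mem_image.1 h
  rw [mem_pathToRoot] at he
  have h1 : T.Anc (T.topEdge χ d) e := (topEdge_spec hχ hd).2.2 e he.1 hde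
  have h2 : T.Anc (T.topEdge χ d) (T.vcol χ d) := anc_trans he.2 h1
  have heq := anc_antisymm h2 (parent_anc (T.topEdge χ d))
  exact (topEdge_spec hχ hd).1 (parent_fix heq.symm)

lemma colors_path_vcol (hχ : T.IsMonotone χ) {c' : ℕ}
    (hc' : ∃ e : T.V, e ≠ T.root ∧ χ e = c') (h : T.vcol χ c' ≠ T.root) :
    (T.pathToRoot (T.vcol χ c')).image χ =
      insert (T.parentColor χ c₀ c')
        ((T.pathToRoot (T.vcol χ (T.parentColor χ c₀ c'))).image χ) := by
  have hvρ : χ (T.vcol χ c') = T.parentColor χ c₀ c' := (parentColor_eq h).symm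
  have hρ := hc_parentColor (c₀ := c₀) h
  obtain ⟨hρr, hρc, hρtop⟩ := topEdge_spec hχ hρ
  have hAnc : T.Anc (T.topEdge χ (T.parentColor χ c₀ c')) (T.vcol χ c') :=
    top_parent_anc_vcol hχ h
  ext x
  constructor
  · intro hx
    obtain ⟨e, he, hxe⟩ := Finset.mem_image.1 hx
    rw [mem_pathToRoot] at he
    rcases anc_comparable he.2 hAnc with h2 | h2
    · rcases eq_or_ne e (T.topEdge χ (T.parentColor χ c₀ c')) with rfl | hne
      · exact Finset.mem_insert.2 (Or.inl (by rw [← hxe, hρc]))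
      · refine Finset.mem_insert.2 (Or.inr (Finset.mem_image.2 ⟨e, ?_, hxe⟩))
        exact mem_pathToRoot.2 ⟨he.1, anc_parent_of_ne h2 hne⟩
    · have := (hχ _ _ hρr h (by rw [hρc, hvρ])).2 e he.1 h2 he.2
      rw [hρc] at this
      exact Finset.mem_insert.2 (Or.inl (by rw [← hxe, this]))
  · intro hx
    rcases Finset.mem_insert.1 hx with rfl | hx
    · exact Finset.mem_image.2 ⟨T.vcol χ c', mem_pathToRoot.2 ⟨h, anc_refl _⟩, hvρ⟩
    · obtain ⟨e, he, hxe⟩ := Finset.mem_image.1 hx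
      rw [mem_pathToRoot] at he
      refine Finset.mem_image.2 ⟨e, mem_pathToRoot.2 ⟨he.1, ?_⟩, hxe⟩
      have h1 : T.Anc e (T.topEdge χ (T.parentColor χ c₀ c')) :=
        anc_trans (parent_anc _) he.2
      exact anc_trans hAnc h1

lemma phi_c₀ : T.phi χ c₀ c₀ = 0 := by rw [FinTree.phi, if_pos rfl]

lemma phi_rec (hχ : T.IsMonotone χ) (hc₀ : ∀ e : T.V, e ≠ T.root → χ e ≠ c₀)
    {c' : ℕ} (hc' : ∃ e : T.V, e ≠ T.root ∧ χ e = c') :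
    T.phi χ c₀ c' = T.kappa χ c₀ c' + T.phi χ c₀ (T.parentColor χ c₀ c') := by
  obtain ⟨e₀, he₀, hce₀⟩ := hc'
  have hc'c₀ : c' ≠ c₀ := by rintro rfl; exact hc₀ e₀ he₀ hce₀
  by_cases h : T.vcol χ c' = T.root
  · rw [FinTree.phi, if_neg hc'c₀, FinTree.parentColor, if_pos h, phi_c₀, h, pathToRoot_root]
    simp
  · have hρne : T.parentColor χ c₀ c' ≠ c₀ := parentColor_ne_c₀ hc₀ h
    have hρ := hc_parentColor (c₀ := c₀) h
    rw [FinTree.phi, if_neg hc'c₀, colors_path_vcol hχ ⟨e₀, he₀, hce₀⟩ h,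
      Finset.sum_insert (notMem_path_vcol hχ hρ), FinTree.phi, if_neg hρne]


lemma vcol_mem (hχ : T.IsMonotone χ) {c c' : ℕ}
    (hc : ∃ e : T.V, e ≠ T.root ∧ χ e = c) (hcc₀ : c ≠ c₀) (hne : c' ≠ c)
    (h : c' ∈ (T.subEdges χ c₀ c).image χ) :
    T.vcol χ c' ≠ T.root ∧ T.vcol χ c' ∈ T.subEdges χ c₀ c := by
  have hc' := exists_edge_of_mem_colors h
  have h1 := top_anc_top hχ hc hcc₀ hne h
  have tne : T.topEdge χ c ≠ T.topEdge χ c' := by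
    intro heq
    exact hne (by rw [← (topEdge_spec hχ hc').2.1, ← heq, (topEdge_spec hχ hc).2.1])
  have h2 : T.Anc (T.topEdge χ c) (T.vcol χ c') := anc_parent_of_ne h1 tne
  have hroot : T.vcol χ c' ≠ T.root := by
    intro hr
    rw [hr] at h2
    exact (topEdge_spec hχ hc).1 (root_anc h2)
  exact ⟨hroot, (mem_subEdges hcc₀).2 ⟨hroot, h2⟩⟩

lemma parentColor_mem_colors (hχ : T.IsMonotone χ) {c c' : ℕ}
    (hc : ∃ e : T.V, e ≠ T.root ∧ χ e = c) (hcc₀ : c ≠ c₀) (hne : c' ≠ c)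
    (h : c' ∈ (T.subEdges χ c₀ c).image χ) :
    T.parentColor χ c₀ c' ∈ (T.subEdges χ c₀ c).image χ := by
  obtain ⟨hroot, hmem⟩ := vcol_mem hχ hc hcc₀ hne h
  exact Finset.mem_image.2 ⟨T.vcol χ c', hmem, (parentColor_eq hroot).symm⟩

lemma phi_mono (hχ : T.IsMonotone χ) (hc₀ : ∀ e : T.V, e ≠ T.root → χ e ≠ c₀) :
    ∀ n : ℕ, ∀ c c' : ℕ, (∃ e : T.V, e ≠ T.root ∧ χ e = c) →
      c' ∈ (T.subEdges χ c₀ c).image χ →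
      (T.subEdges χ c₀ c).card - (T.subEdges χ c₀ c').card ≤ n →
      T.phi χ c₀ c ≤ T.phi χ c₀ c' := by
  intro n
  induction n with
  | zero =>
    intro c c' hc h hn
    rcases eq_or_ne c' c with rfl | hne
    · exact le_refl _
    · exfalso
      obtain ⟨e₀, he₀, hce₀⟩ := hc
      have hcc₀ : c ≠ c₀ := by rintro rfl; exact hc₀ e₀ he₀ hce₀
      have hc' := exists_edge_of_mem_colors h
      obtain ⟨e₁, he₁, hce₁⟩ := hc'
      have hc'c₀ : c' ≠ c₀ := by rintro rfl; exact hc₀ e₁ he₁ hce₁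
      obtain ⟨hroot, hmem⟩ := vcol_mem hχ ⟨e₀, he₀, hce₀⟩ hcc₀ hne h
      have h1 := card_subEdges_lt_parent hχ hc₀ ⟨e₁, he₁, hce₁⟩ hroot
      have h2 : (T.subEdges χ c₀ (T.parentColor χ c₀ c')).card ≤ (T.subEdges χ c₀ c).card := by
        rcases eq_or_ne (T.parentColor χ c₀ c') c with heq | hne2
        · rw [heq]
        · exact Finset.card_le_card (subEdges_subset hχ ⟨e₀, he₀, hce₀⟩ hcc₀
            (parentColor_ne_c₀ hc₀ hroot) hne2
            (parentColor_mem_colors hχ ⟨e₀, he₀, hce₀⟩ hcc₀ hne h))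
      omega
  | succ n ih =>
    intro c c' hc h hn
    rcases eq_or_ne c' c with rfl | hne
    · exact le_refl _
    · obtain ⟨e₀, he₀, hce₀⟩ := hc
      have hcc₀ : c ≠ c₀ := by rintro rfl; exact hc₀ e₀ he₀ hce₀
      have hc' := exists_edge_of_mem_colors h
      obtain ⟨e₁, he₁, hce₁⟩ := hc'
      obtain ⟨hroot, hmem⟩ := vcol_mem hχ ⟨e₀, he₀, hce₀⟩ hcc₀ hne h
      have h1 := card_subEdges_lt_parent hχ hc₀ ⟨e₁, he₁, hce₁⟩ hroot
      have hρcol := parentColor_mem_colors hχ ⟨e₀, he₀, hce₀⟩ hcc₀ hne h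
      have h2 : (T.subEdges χ c₀ (T.parentColor χ c₀ c')).card ≤ (T.subEdges χ c₀ c).card := by
        rcases eq_or_ne (T.parentColor χ c₀ c') c with heq | hne2
        · rw [heq]
        · exact Finset.card_le_card (subEdges_subset hχ ⟨e₀, he₀, hce₀⟩ hcc₀
            (parentColor_ne_c₀ hc₀ hroot) hne2 hρcol)
      have h3 := ih c (T.parentColor χ c₀ c') ⟨e₀, he₀, hce₀⟩ hρcol (by omega)
      have h4 := phi_rec hχ hc₀ ⟨e₁, he₁, hce₁⟩
      have h5 := kappa_pos hχ hc₀ (c' := c') ⟨e₁, he₁, hce₁⟩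
      omega

lemma phi_step (hχ : T.IsMonotone χ) (hc₀ : ∀ e : T.V, e ≠ T.root → χ e ≠ c₀)
    {c c' : ℕ} (hc : ∃ e : T.V, e ≠ T.root ∧ χ e = c)
    (h : c' ∈ (T.subEdges χ c₀ c).image χ) (hne : c' ≠ c) :
    T.phi χ c₀ c + T.kappa χ c₀ c' ≤ T.phi χ c₀ c' := by
  obtain ⟨e₀, he₀, hce₀⟩ := hc
  have hcc₀ : c ≠ c₀ := by rintro rfl; exact hc₀ e₀ he₀ hce₀
  have hc' := exists_edge_of_mem_colors h
  obtain ⟨hroot, hmem⟩ := vcol_mem hχ ⟨e₀, he₀, hce₀⟩ hcc₀ hne h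
  have hρcol := parentColor_mem_colors hχ ⟨e₀, he₀, hce₀⟩ hcc₀ hne h
  have h1 := phi_mono hχ hc₀ (T.subEdges χ c₀ c).card c (T.parentColor χ c₀ c')
    ⟨e₀, he₀, hce₀⟩ hρcol (by omega)
  have h2 := phi_rec hχ hc₀ hc'
  omega

lemma exists_child (hχ : T.IsMonotone χ) (hc₀ : ∀ e : T.V, e ≠ T.root → χ e ≠ c₀) :
    ∀ n : ℕ, ∀ c c' : ℕ, (∃ e : T.V, e ≠ T.root ∧ χ e = c) →
      c' ∈ (T.subEdges χ c₀ c).image χ → c' ≠ c →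
      (T.subEdges χ c₀ c).card - (T.subEdges χ c₀ c').card ≤ n →
      ∃ d : ℕ, d ∈ (T.subEdges χ c₀ c).image χ ∧ d ≠ c ∧ T.parentColor χ c₀ d = c ∧
        c' ∈ (T.subEdges χ c₀ d).image χ := by
  intro n
  induction n with
  | zero =>
    intro c c' hc h hne hn
    exfalso
    obtain ⟨e₀, he₀, hce₀⟩ := hc
    have hcc₀ : c ≠ c₀ := by rintro rfl; exact hc₀ e₀ he₀ hce₀
    obtain ⟨e₁, he₁, hce₁⟩ := exists_edge_of_mem_colors h
    obtain ⟨hroot, hmem⟩ := vcol_mem hχ ⟨e₀, he₀, hce₀⟩ hcc₀ hne h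
    have h1 := card_subEdges_lt_parent hχ hc₀ ⟨e₁, he₁, hce₁⟩ hroot
    have h2 : (T.subEdges χ c₀ (T.parentColor χ c₀ c')).card ≤ (T.subEdges χ c₀ c).card := by
      rcases eq_or_ne (T.parentColor χ c₀ c') c with heq | hne2
      · rw [heq]
      · exact Finset.card_le_card (subEdges_subset hχ ⟨e₀, he₀, hce₀⟩ hcc₀
          (parentColor_ne_c₀ hc₀ hroot) hne2
          (parentColor_mem_colors hχ ⟨e₀, he₀, hce₀⟩ hcc₀ hne h))
    omega
  | succ n ih =>
    intro c c' hc h hne hn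
    obtain ⟨e₀, he₀, hce₀⟩ := hc
    have hcc₀ : c ≠ c₀ := by rintro rfl; exact hc₀ e₀ he₀ hce₀
    obtain ⟨e₁, he₁, hce₁⟩ := exists_edge_of_mem_colors h
    have hc'c₀ : c' ≠ c₀ := by rintro rfl; exact hc₀ e₁ he₁ hce₁
    obtain ⟨hroot, hmem⟩ := vcol_mem hχ ⟨e₀, he₀, hce₀⟩ hcc₀ hne h
    have hρcol := parentColor_mem_colors hχ ⟨e₀, he₀, hce₀⟩ hcc₀ hne h
    rcases eq_or_ne (T.parentColor χ c₀ c') c with heq | hne2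
    · exact ⟨c', h, hne, heq, self_mem_colors hχ ⟨e₁, he₁, hce₁⟩ hc'c₀⟩
    · have h1 := card_subEdges_lt_parent hχ hc₀ ⟨e₁, he₁, hce₁⟩ hroot
      have h2 : (T.subEdges χ c₀ (T.parentColor χ c₀ c')).card ≤ (T.subEdges χ c₀ c).card :=
        Finset.card_le_card (subEdges_subset hχ ⟨e₀, he₀, hce₀⟩ hcc₀
          (parentColor_ne_c₀ hc₀ hroot) hne2 hρcol)
      obtain ⟨d, hd1, hd2, hd3, hd4⟩ := ih c (T.parentColor χ c₀ c')
        ⟨e₀, he₀, hce₀⟩ hρcol hne2 (by omega)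
      refine ⟨d, hd1, hd2, hd3, ?_⟩
      obtain ⟨e₂, he₂, hce₂⟩ := exists_edge_of_mem_colors hd1
      have hdc₀ : d ≠ c₀ := by rintro rfl; exact hc₀ e₂ he₂ hce₂
      have hsub1 : T.subEdges χ c₀ c' ⊆ T.subEdges χ c₀ (T.parentColor χ c₀ c') :=
        subEdges_subset_parent hχ hc₀ ⟨e₁, he₁, hce₁⟩ hroot
      have hsub2 : T.subEdges χ c₀ (T.parentColor χ c₀ c') ⊆ T.subEdges χ c₀ d := by
        rcases eq_or_ne (T.parentColor χ c₀ c') d with heq' | hne'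
        · rw [heq']
        · exact subEdges_subset hχ ⟨e₂, he₂, hce₂⟩ hdc₀
            (parentColor_ne_c₀ hc₀ hroot) hne' hd4
      exact Finset.mem_image.2 ⟨T.topEdge χ c',
        hsub2 (hsub1 (topEdge_mem_subEdges hχ ⟨e₁, he₁, hce₁⟩ hc'c₀)),
        (topEdge_spec hχ ⟨e₁, he₁, hce₁⟩).2.1⟩

lemma no_nested (hχ : T.IsMonotone χ) (hc₀ : ∀ e : T.V, e ≠ T.root → χ e ≠ c₀)
    {c d d' : ℕ} (hc : ∃ e : T.V, e ≠ T.root ∧ χ e = c) (hcc₀ : c ≠ c₀)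
    (hd : d ∈ (T.subEdges χ c₀ c).image χ) (hd' : d' ∈ (T.subEdges χ c₀ c).image χ)
    (hdc : d ≠ c) (hd'c : d' ≠ c) (hpd' : T.parentColor χ c₀ d' = c)
    (hanc : T.Anc (T.topEdge χ d) (T.topEdge χ d')) : d = d' := by
  have hcd := exists_edge_of_mem_colors hd
  have hcd' := exists_edge_of_mem_colors hd'
  rcases eq_or_ne (T.topEdge χ d) (T.topEdge χ d') with heq | tne
  · rw [← (topEdge_spec hχ hcd).2.1, heq, (topEdge_spec hχ hcd').2.1]
  · exfalso
    have hvroot : T.vcol χ d' ≠ T.root := by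
      intro hr
      rw [FinTree.parentColor, if_pos hr] at hpd'
      exact hcc₀ hpd'.symm
    have hχvd' : χ (T.vcol χ d') = c := by rw [← parentColor_eq hvroot, hpd']
    have hanc2 : T.Anc (T.topEdge χ d) (T.vcol χ d') := anc_parent_of_ne hanc tne
    have htcd : T.Anc (T.topEdge χ c) (T.topEdge χ d) := top_anc_top hχ hc hcc₀ hdc hd
    have := (hχ (T.topEdge χ c) (T.vcol χ d') (topEdge_spec hχ hc).1 hvroot
      (by rw [(topEdge_spec hχ hc).2.1, hχvd'])).2
      (T.topEdge χ d) (topEdge_spec hχ hcd).1 htcd hanc2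
    rw [(topEdge_spec hχ hc).2.1, (topEdge_spec hχ hcd).2.1] at this
    exact hdc this

lemma children_disjoint (hχ : T.IsMonotone χ) (hc₀ : ∀ e : T.V, e ≠ T.root → χ e ≠ c₀)
    {c d d' : ℕ} (hc : ∃ e : T.V, e ≠ T.root ∧ χ e = c) (hcc₀ : c ≠ c₀)
    (hd : d ∈ (T.subEdges χ c₀ c).image χ) (hd' : d' ∈ (T.subEdges χ c₀ c).image χ)
    (hdc : d ≠ c) (hd'c : d' ≠ c) (hpd : T.parentColor χ c₀ d = c)
    (hpd' : T.parentColor χ c₀ d' = c) (hne : d ≠ d') :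
    Disjoint (T.subEdges χ c₀ d) (T.subEdges χ c₀ d') := by
  rw [Finset.disjoint_left]
  intro e he he'
  obtain ⟨e₂, he₂, hce₂⟩ := exists_edge_of_mem_colors hd
  obtain ⟨e₃, he₃, hce₃⟩ := exists_edge_of_mem_colors hd'
  have hdc₀ : d ≠ c₀ := by rintro rfl; exact hc₀ e₂ he₂ hce₂
  have hd'c₀ : d' ≠ c₀ := by rintro rfl; exact hc₀ e₃ he₃ hce₃
  have h1 := ((mem_subEdges hdc₀).1 he).2
  have h2 := ((mem_subEdges hd'c₀).1 he').2
  rcases anc_comparable h1 h2 with h3 | h3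
  · exact hne (no_nested hχ hc₀ hc hcc₀ hd hd' hdc hd'c hpd' h3)
  · exact hne (no_nested hχ hc₀ hc hcc₀ hd' hd hd'c hdc hpd h3).symm

lemma colors_subEdges_subset (hχ : T.IsMonotone χ) (hc₀ : ∀ e : T.V, e ≠ T.root → χ e ≠ c₀)
    {d c' : ℕ} (hd : ∃ e : T.V, e ≠ T.root ∧ χ e = d) (hdc₀ : d ≠ c₀)
    (h : c' ∈ (T.subEdges χ c₀ d).image χ) :
    T.subEdges χ c₀ c' ⊆ T.subEdges χ c₀ d := by
  obtain ⟨e₁, he₁, hce₁⟩ := exists_edge_of_mem_colors h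
  have hc'c₀ : c' ≠ c₀ := by rintro rfl; exact hc₀ e₁ he₁ hce₁
  rcases eq_or_ne c' d with rfl | hne
  · exact subset_rfl
  · exact subEdges_subset hχ hd hdc₀ hc'c₀ hne h

lemma colors_disjoint (hχ : T.IsMonotone χ) (hc₀ : ∀ e : T.V, e ≠ T.root → χ e ≠ c₀)
    {c d d' : ℕ} (hc : ∃ e : T.V, e ≠ T.root ∧ χ e = c) (hcc₀ : c ≠ c₀)
    (hd : d ∈ (T.subEdges χ c₀ c).image χ) (hd' : d' ∈ (T.subEdges χ c₀ c).image χ)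
    (hdc : d ≠ c) (hd'c : d' ≠ c) (hpd : T.parentColor χ c₀ d = c)
    (hpd' : T.parentColor χ c₀ d' = c) (hne : d ≠ d') :
    Disjoint ((T.subEdges χ c₀ d).image χ) ((T.subEdges χ c₀ d').image χ) := by
  rw [Finset.disjoint_left]
  intro c' h1 h2
  obtain ⟨e₂, he₂, hce₂⟩ := exists_edge_of_mem_colors hd
  obtain ⟨e₃, he₃, hce₃⟩ := exists_edge_of_mem_colors hd'
  have hdc₀ : d ≠ c₀ := by rintro rfl; exact hc₀ e₂ he₂ hce₂
  have hd'c₀ : d' ≠ c₀ := by rintro rfl; exact hc₀ e₃ he₃ hce₃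
  obtain ⟨e₁, he₁, hce₁⟩ := exists_edge_of_mem_colors h1
  have hc'c₀ : c' ≠ c₀ := by rintro rfl; exact hc₀ e₁ he₁ hce₁
  have hs1 := colors_subEdges_subset hχ hc₀ ⟨e₂, he₂, hce₂⟩ hdc₀ h1
  have hs2 := colors_subEdges_subset hχ hc₀ ⟨e₃, he₃, hce₃⟩ hd'c₀ h2
  have htop := topEdge_mem_subEdges hχ ⟨e₁, he₁, hce₁⟩ hc'c₀
  exact (Finset.disjoint_left.1
    (children_disjoint hχ hc₀ hc hcc₀ hd hd' hdc hd'c hpd hpd' hne)) (hs1 htop) (hs2 htop)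


lemma main_count (hχ : T.IsMonotone χ) (hc₀ : ∀ e : T.V, e ≠ T.root → χ e ≠ c₀) :
    ∀ n : ℕ, ∀ c : ℕ, (∃ e : T.V, e ≠ T.root ∧ χ e = c) →
      (T.subEdges χ c₀ c).card ≤ n → ∀ k : ℕ,
      (((T.subEdges χ c₀ c).image χ).filter
        (fun c' => T.phi χ c₀ c' ≤ T.phi χ c₀ c + (k : ℤ))).card < 2 ^ (k + 1) := by
  intro n
  induction n with
  | zero =>
    intro c hc hcard k
    obtain ⟨e₀, he₀, hce₀⟩ := hc
    have hcc₀ : c ≠ c₀ := by rintro rfl; exact hc₀ e₀ he₀ hce₀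
    have := subEdges_nonempty_card hχ ⟨e₀, he₀, hce₀⟩ hcc₀
    omega
  | succ n ih =>
    intro c hc hcard k
    obtain ⟨e₀, he₀, hce₀⟩ := hc
    have hcc₀ : c ≠ c₀ := by rintro rfl; exact hc₀ e₀ he₀ hce₀
    have hc : ∃ e : T.V, e ≠ T.root ∧ χ e = c := ⟨e₀, he₀, hce₀⟩
    set Col := (T.subEdges χ c₀ c).image χ with hCol
    set S := Col.filter (fun c' => T.phi χ c₀ c' ≤ T.phi χ c₀ c + (k : ℤ)) with hSdef
    set D := Col.filter (fun d => d ≠ c ∧ T.parentColor χ c₀ d = c) with hDdef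
    set f : ℕ → Finset ℕ := fun d => ((T.subEdges χ c₀ d).image χ).filter
      (fun c' => T.phi χ c₀ c' ≤ T.phi χ c₀ c + (k : ℤ)) with hfdef
    have hDmem : ∀ d ∈ D, d ∈ Col ∧ d ≠ c ∧ T.parentColor χ c₀ d = c := by
      intro d hd
      have := Finset.mem_filter.1 hd
      exact ⟨this.1, this.2.1, this.2.2⟩
    have hHcD : ∀ d ∈ D, ∃ e : T.V, e ≠ T.root ∧ χ e = d := by
      intro d hd
      exact exists_edge_of_mem_colors (hDmem d hd).1
    have hDc₀ : ∀ d ∈ D, d ≠ c₀ := by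
      intro d hd
      obtain ⟨e₁, he₁, hce₁⟩ := hHcD d hd
      rintro rfl; exact hc₀ e₁ he₁ hce₁
    have hsubD : ∀ d ∈ D, T.subEdges χ c₀ d ⊆ T.subEdges χ c₀ c := by
      intro d hd
      exact subEdges_subset hχ hc hcc₀ (hDc₀ d hd) (hDmem d hd).2.1 (hDmem d hd).1
    have hcardD : ∀ d ∈ D, (T.subEdges χ c₀ d).card ≤ n := by
      intro d hd
      have hlt : (T.subEdges χ c₀ d).card < (T.subEdges χ c₀ c).card := by
        apply Finset.card_lt_card
        refine ⟨hsubD d hd, fun hsup => ?_⟩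
        exact topEdge_notMem hχ hc hcc₀ (hDc₀ d hd) (hDmem d hd).2.1 (hDmem d hd).1
          (hsup (topEdge_mem_subEdges hχ hc hcc₀))
      omega
    have hphiD : ∀ d ∈ D, T.phi χ c₀ d = T.kappa χ c₀ d + T.phi χ c₀ c := by
      intro d hd
      have := phi_rec hχ hc₀ (hHcD d hd)
      rw [(hDmem d hd).2.2] at this
      exact this
    -- decomposition S = insert c (D.biUnion f)
    have hcnotmem : c ∉ D.biUnion f := by
      intro hcm
      obtain ⟨d, hdD, hcf⟩ := Finset.mem_biUnion.1 hcm
      have hccol : c ∈ (T.subEdges χ c₀ d).image χ := (Finset.mem_filter.1 hcf).1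
      have hsub : T.subEdges χ c₀ c ⊆ T.subEdges χ c₀ d :=
        colors_subEdges_subset hχ hc₀ (hHcD d hdD) (hDc₀ d hdD) hccol
      exact topEdge_notMem hχ hc hcc₀ (hDc₀ d hdD) (hDmem d hdD).2.1 (hDmem d hdD).1
        (hsub (topEdge_mem_subEdges hχ hc hcc₀))
    have hSeq : S = insert c (D.biUnion f) := by
      ext x
      constructor
      · intro hx
        obtain ⟨hx1, hx2⟩ := Finset.mem_filter.1 hx
        rcases eq_or_ne x c with rfl | hne
        · exact Finset.mem_insert_self _ _
        · obtain ⟨d, hd1, hd2, hd3, hd4⟩ := exists_child hχ hc₀ (T.subEdges χ c₀ c).card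
            c x hc hx1 hne (Nat.sub_le _ _)
          refine Finset.mem_insert.2 (Or.inr (Finset.mem_biUnion.2
            ⟨d, Finset.mem_filter.2 ⟨hd1, hd2, hd3⟩, Finset.mem_filter.2 ⟨hd4, hx2⟩⟩))
      · intro hx
        rcases Finset.mem_insert.1 hx with rfl | hx
        · refine Finset.mem_filter.2 ⟨self_mem_colors hχ hc hcc₀, by omega⟩
        · obtain ⟨d, hdD, hxf⟩ := Finset.mem_biUnion.1 hx
          obtain ⟨hx1, hx2⟩ := Finset.mem_filter.1 hxf
          refine Finset.mem_filter.2 ⟨?_, hx2⟩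
          exact Finset.image_subset_image (hsubD d hdD) hx1
    have hdisj : ∀ d ∈ D, ∀ d' ∈ D, d ≠ d' → Disjoint (f d) (f d') := by
      intro d hd d' hd' hne
      exact Disjoint.mono (Finset.filter_subset _ _) (Finset.filter_subset _ _)
        (colors_disjoint hχ hc₀ hc hcc₀ (hDmem d hd).1 (hDmem d' hd').1
          (hDmem d hd).2.1 (hDmem d' hd').2.1 (hDmem d hd).2.2 (hDmem d' hd').2.2 hne)
    have hcardS : S.card = 1 + ∑ d ∈ D, (f d).card := by
      rw [hSeq, Finset.card_insert_of_notMem hcnotmem, Finset.card_biUnion hdisj]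
      omega
    set D' := D.filter (fun d => T.kappa χ c₀ d ≤ (k : ℤ)) with hD'def
    have hD'sub : D' ⊆ D := Finset.filter_subset _ _
    have hvanish : ∀ d ∈ D, d ∉ D' → (f d).card = 0 := by
      intro d hd hnd
      have hκ : ¬ T.kappa χ c₀ d ≤ (k : ℤ) := by
        intro hκ; exact hnd (Finset.mem_filter.2 ⟨hd, hκ⟩)
      rw [Finset.card_eq_zero, Finset.eq_empty_iff_forall_notMem]
      intro c' hc'f
      obtain ⟨h1, h2⟩ := Finset.mem_filter.1 hc'f
      have h3 := phi_mono hχ hc₀ (T.subEdges χ c₀ d).card d c' (hHcD d hd) h1 (Nat.sub_le _ _)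
      have h4 := hphiD d hd
      omega
    have hsumeq : ∑ d ∈ D, (f d).card = ∑ d ∈ D', (f d).card :=
      (Finset.sum_subset hD'sub hvanish).symm
    rcases Finset.eq_empty_or_nonempty D' with hD'e | hD'ne
    · rw [hcardS, hsumeq, hD'e]
      have := Nat.one_lt_two_pow_iff.2 (show k + 1 ≠ 0 by omega)
      simpa using this
    -- real-number estimates
    · have ha : (0:ℝ) < ((T.subEdges χ c₀ c).card : ℝ) := by
        exact_mod_cast subEdges_nonempty_card hχ hc hcc₀
      have key : ∀ d ∈ D', ((f d).card : ℝ) + 1 <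
          (2:ℝ) ^ ((k : ℤ) + 1) *
            (((T.subEdges χ c₀ d).card : ℝ) / ((T.subEdges χ c₀ c).card : ℝ)) := by
        intro d hd'
        have hd : d ∈ D := hD'sub hd'
        have hκk : T.kappa χ c₀ d ≤ (k : ℤ) := (Finset.mem_filter.1 hd').2
        have hκ1 : 1 ≤ T.kappa χ c₀ d := kappa_pos hχ hc₀ (hHcD d hd)
        set Kd : ℕ := k - (T.kappa χ c₀ d).toNat with hKd
        have hKdcast : (Kd : ℤ) = (k : ℤ) - T.kappa χ c₀ d := by
          rw [hKd]; push_cast; omega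
        have hfilter : f d = ((T.subEdges χ c₀ d).image χ).filter
            (fun c' => T.phi χ c₀ c' ≤ T.phi χ c₀ d + (Kd : ℤ)) := by
          apply Finset.filter_congr
          intro x _
          have h4 := hphiD d hd
          constructor <;> intro h <;> omega
        have hcardf : (f d).card < 2 ^ (Kd + 1) := by
          rw [hfilter]
          exact ih d (hHcD d hd) (hcardD d hd) Kd
        have h1 : ((f d).card : ℝ) + 1 ≤ (2:ℝ) ^ (Kd + 1) := by
          have : (f d).card + 1 ≤ 2 ^ (Kd + 1) := hcardf
          exact_mod_cast this
        refine lt_of_le_of_lt h1 ?_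
        have hb : (0:ℝ) < ((T.subEdges χ c₀ d).card : ℝ) := by
          exact_mod_cast subEdges_nonempty_card hχ (hHcD d hd) (hDc₀ d hd)
        have hκb := kappa_bound hχ hc₀ (hHcD d hd)
        rw [(hDmem d hd).2.2] at hκb
        have hzpow : (0:ℝ) < (2:ℝ) ^ (T.kappa χ c₀ d) := zpow_pos (by norm_num) _
        have hinv : ((2:ℝ) ^ (T.kappa χ c₀ d))⁻¹ <
            ((T.subEdges χ c₀ d).card : ℝ) / ((T.subEdges χ c₀ c).card : ℝ) := by
          rw [inv_eq_one_div, div_lt_div_iff₀ hzpow ha]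
          linarith [hκb]
        have heq2 : (2:ℝ) ^ (Kd + 1) =
            (2:ℝ) ^ ((k : ℤ) + 1) * ((2:ℝ) ^ (T.kappa χ c₀ d))⁻¹ := by
          rw [← zpow_natCast (2:ℝ) (Kd + 1), ← zpow_neg, ← zpow_add₀ (by norm_num : (2:ℝ) ≠ 0)]
          congr 1
          push_cast
          omega
        rw [heq2]
        exact mul_lt_mul_of_pos_left hinv (zpow_pos (by norm_num) _)
      have hsum_b : ∑ d ∈ D', ((T.subEdges χ c₀ d).card : ℝ) ≤
          ((T.subEdges χ c₀ c).card : ℝ) := by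
        have hdisjE : ∀ d ∈ D', ∀ d' ∈ D', d ≠ d' →
            Disjoint (T.subEdges χ c₀ d) (T.subEdges χ c₀ d') := by
          intro d hd d' hd' hne
          exact children_disjoint hχ hc₀ hc hcc₀ (hDmem d (hD'sub hd)).1
            (hDmem d' (hD'sub hd')).1 (hDmem d (hD'sub hd)).2.1 (hDmem d' (hD'sub hd')).2.1
            (hDmem d (hD'sub hd)).2.2 (hDmem d' (hD'sub hd')).2.2 hne
        have h1 : ∑ d ∈ D', (T.subEdges χ c₀ d).card ≤ (T.subEdges χ c₀ c).card := by
          rw [← Finset.card_biUnion hdisjE]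
          apply Finset.card_le_card
          intro e he
          obtain ⟨d, hd, hed⟩ := Finset.mem_biUnion.1 he
          exact hsubD d (hD'sub hd) hed
        exact_mod_cast h1
      have hstep := Finset.sum_lt_sum_of_nonempty hD'ne key
      have hfinal : ∑ d ∈ D', (((f d).card : ℝ) + 1) < (2:ℝ) ^ ((k : ℤ) + 1) := by
        refine lt_of_lt_of_le hstep ?_
        rw [← Finset.mul_sum]
        calc (2:ℝ) ^ ((k : ℤ) + 1) * (∑ d ∈ D', ((T.subEdges χ c₀ d).card : ℝ) /
              ((T.subEdges χ c₀ c).card : ℝ)) ≤ (2:ℝ) ^ ((k : ℤ) + 1) * 1 := by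
              apply mul_le_mul_of_nonneg_left _ (le_of_lt (zpow_pos (by norm_num) _))
              rw [← Finset.sum_div, div_le_one ha]
              exact hsum_b
        _ = (2:ℝ) ^ ((k : ℤ) + 1) := mul_one _
      have hD'card : 1 ≤ D'.card := Finset.card_pos.2 hD'ne
      have hsum_split : ∑ d ∈ D', (((f d).card : ℝ) + 1) =
          (∑ d ∈ D', ((f d).card : ℝ)) + D'.card := by
        rw [Finset.sum_add_distrib, Finset.sum_const, nsmul_eq_mul, mul_one]
      have hcast : ((∑ d ∈ D', (f d).card : ℕ) : ℝ) = ∑ d ∈ D', ((f d).card : ℝ) := by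
        push_cast; ring
      have hSreal : (S.card : ℝ) < (2:ℝ) ^ ((k : ℤ) + 1) := by
        rw [hcardS, hsumeq]
        push_cast
        rw [hsum_split] at hfinal
        have : (1:ℝ) ≤ (D'.card : ℝ) := by exact_mod_cast hD'card
        linarith
      have h2pow : ((2 ^ (k + 1) : ℕ) : ℝ) = (2:ℝ) ^ ((k : ℤ) + 1) := by
        rw [show ((k:ℤ) + 1) = ((k + 1 : ℕ) : ℤ) by omega, zpow_natCast]
        push_cast
        ring
      rw [← h2pow] at hSreal
      exact_mod_cast hSreal

end FinTree

end Aux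


/-- Fewer than `2^{k+1}` colors `c'` in the subtree `T(c)` have `φ(c') − φ(c) ≤ k`. -/
theorem count_colors_up_to_level (T : FinTree) (χ : T.V → ℕ) (hχ : T.IsMonotone χ)
    (c₀ : ℕ) (hc₀ : ∀ e : T.V, e ≠ T.root → χ e ≠ c₀)
    (c : ℕ) (hc : ∃ e : T.V, e ≠ T.root ∧ χ e = c) (k : ℕ) (hk : 1 ≤ k) :
    (((T.subEdges χ c₀ c).image χ).filter
        (fun c' => T.phi χ c₀ c' - T.phi χ c₀ c ≤ (k : ℤ))).card < 2 ^ (k + 1) := by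
  have hpred : (((T.subEdges χ c₀ c).image χ).filter
      (fun c' => T.phi χ c₀ c' - T.phi χ c₀ c ≤ (k : ℤ))) =
      (((T.subEdges χ c₀ c).image χ).filter
      (fun c' => T.phi χ c₀ c' ≤ T.phi χ c₀ c + (k : ℤ))) := by
    apply Finset.filter_congr
    intro x _
    constructor <;> intro h <;> omega
  rw [hpred]
  exact FinTree.main_count hχ hc₀ (T.subEdges χ c₀ c).card c hc le_rfl k

end
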